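/- arXiv:2305.14593 — 4 statements merged into one kernel-verified Lean document; each statement's English description precedes it below -/
import Mathlib

section
/- For probability densities p, q on Θ and M ≥ 1, D_4(p,q,M) = KL( p(θ_0)∏_{k=1}^M q(θ_k) ‖ (1/(M+1)) Σ_{m=0}^M p(θ_m)∏_{k≠m} q(θ_k) ) equals 0 if and only if p = q almost everywhere. -/
open MeasureTheory Real

noncomputable section

/-- Kullback–Leibler divergence between densities `p` and `q` w.r.t. a base measure `μ`. -/
def klF {α : Type*} [MeasurableSpace α] (μ : Measure α) (p q : α → ℝ) : ℝ :=
  ∫ x, p x * Real.log (p x / q x) ∂μ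

/-- The density `θ ↦ p(θ_0) ∏_{k=1}^M q(θ_k)` on `Θ^{M+1}`. -/
def numDens {Θ : Type*} (p q : Θ → ℝ) (M : ℕ) : (Fin (M + 1) → Θ) → ℝ :=
  fun v => p (v 0) * ∏ k ∈ Finset.univ.erase (0 : Fin (M + 1)), q (v k)

/-- The uniform-mixture density `θ ↦ (1/(M+1)) Σ_m p(θ_m) ∏_{k≠m} q(θ_k)` on `Θ^{M+1}`. -/
def mixDens {Θ : Type*} (p q : Θ → ℝ) (M : ℕ) : (Fin (M + 1) → Θ) → ℝ :=
  fun v => (1 / (M + 1 : ℝ)) *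
    ∑ m, p (v m) * ∏ k ∈ Finset.univ.erase m, q (v k)

/-- The multiclass divergence `D_4(p,q,M)`. -/
def D4 {Θ : Type*} [MeasurableSpace Θ] (μ : Measure Θ) (p q : Θ → ℝ) (M : ℕ) : ℝ :=
  klF (Measure.pi fun _ : Fin (M + 1) => μ) (numDens p q M) (mixDens p q M)

/-!
Both `numDens` and `mixDens` are probability densities on `Θ^{M+1}`, so by the equality case of
Gibbs' inequality `D₄ = 0` forces `numDens = mixDens` a.e. Integrating this identity over
`{θ₀ ∈ A}` gives `∫_A p = (∫_A p + M ∫_A q) / (M + 1)`, i.e. `∫_A p = ∫_A q` for every `A`.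
Conversely, if `p = q` a.e. then every summand of the mixture equals the numerator.
-/

open InformationTheory Function

lemma mul_log_div_sub_add_eq_mul_klFun {a b : ℝ} (hb : b ≠ 0) :
    a * log (a / b) - a + b = b * klFun (a / b) := by
  rw [klFun]
  field_simp
  ring

/-- Gibbs' inequality, equality case. -/
theorem ae_eq_of_integral_mul_log_div_eq_zero {α : Type*} [MeasurableSpace α] {ν : Measure α}
    {f g : α → ℝ} (hf : Integrable f ν) (hg : Integrable g ν) (hf0 : 0 ≤ f) (hg0 : 0 ≤ g)
    (hfg : ∀ x, g x = 0 → f x = 0) (hint : Integrable (fun x => f x * log (f x / g x)) ν)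
    (h_eq : ∫ x, f x ∂ν = ∫ x, g x ∂ν) (hKL : ∫ x, f x * log (f x / g x) ∂ν = 0) :
    f =ᵐ[ν] g := by
  set φ : α → ℝ := (fun x => f x * log (f x / g x)) - f + g
  have hφ : ∀ x, 0 ≤ φ x ∧ (φ x = 0 → f x = g x) := by
    intro x
    rcases (hg0 x).eq_or_lt with hgx | hgx
    · simp [φ, ← hgx, hfg x hgx.symm]
    · have ht : 0 ≤ f x / g x := div_nonneg (hf0 x) hgx.le
      simp only [φ, Pi.add_apply, Pi.sub_apply, mul_log_div_sub_add_eq_mul_klFun hgx.ne']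
      refine ⟨mul_nonneg hgx.le (klFun_nonneg ht), fun h => ?_⟩
      have h1 := (klFun_eq_zero_iff ht).1 ((mul_eq_zero.1 h).resolve_left hgx.ne')
      exact (div_eq_one_iff_eq hgx.ne').1 h1
  have hφ_int : ∫ x, φ x ∂ν = 0 := by
    rw [integral_add' (hint.sub hf) hg, integral_sub' hint hf, hKL, h_eq]
    ring
  filter_upwards [(integral_eq_zero_iff_of_nonneg (fun x => (hφ x).1)
    ((hint.sub hf).add hg)).1 hφ_int] with x hx
  exact (hφ x).2 hx

lemma klF_eq_zero_of_ae_eq {α : Type*} [MeasurableSpace α] {ν : Measure α} {f g : α → ℝ}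
    (h : f =ᵐ[ν] g) : klF ν f g = 0 := by
  refine integral_eq_zero_of_ae ?_
  filter_upwards [h] with x hx
  rw [hx]
  rcases eq_or_ne (g x) 0 with h0 | h0 <;> simp [h0]

section Pi

variable {ι E : Type*} [Fintype ι] [DecidableEq ι]

lemma indicator_eval_preimage_prod (f : ι → E → ℝ) (i : ι) (A : Set E) (v : ι → E) :
    (eval i ⁻¹' A).indicator (fun v => ∏ j, f j (v j)) v
      = ∏ j, update f i (A.indicator (f i)) j (v j) := by
  by_cases hv : v i ∈ A
  · rw [Set.indicator_of_mem (show v ∈ eval i ⁻¹' A from hv)]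
    refine Finset.prod_congr rfl fun j _ => ?_
    rcases eq_or_ne j i with rfl | hj
    · simp [Set.indicator_of_mem hv]
    · rw [update_of_ne hj]
  · rw [Set.indicator_of_notMem (show v ∉ eval i ⁻¹' A from hv)]
    exact (Finset.prod_eq_zero (Finset.mem_univ i) (by simp [hv])).symm

theorem integral_indicator_eval_preimage_prod [MeasurableSpace E] {μ : ι → Measure E}
    [∀ i, SigmaFinite (μ i)]
    (f : ι → E → ℝ) (i : ι) {A : Set E} (hA : MeasurableSet A) :
    ∫ v, (eval i ⁻¹' A).indicator (fun v => ∏ j, f j (v j)) v ∂Measure.pi μ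
      = (∫ x in A, f i x ∂μ i) * ∏ j ∈ Finset.univ.erase i, ∫ x, f j x ∂μ j := by
  simp_rw [indicator_eval_preimage_prod, integral_fintype_prod_eq_prod]
  rw [← Finset.mul_prod_erase _ _ (Finset.mem_univ i), update_self, integral_indicator hA]
  congr 1
  exact Finset.prod_congr rfl fun j hj => by rw [update_of_ne (Finset.ne_of_mem_erase hj)]

end Pi

lemma integral_update_eq_one {Θ ι : Type*} [DecidableEq ι] [MeasurableSpace Θ] {μ : Measure Θ}
    {p q : Θ → ℝ} (hp1 : ∫ x, p x ∂μ = 1) (hq1 : ∫ x, q x ∂μ = 1) (m j : ι) :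
    ∫ x, update (fun _ => q) m p j x ∂μ = 1 := by
  rcases eq_or_ne j m with rfl | hj
  · simpa using hp1
  · simpa [update_of_ne hj] using hq1

section Densities

variable {Θ ι : Type*} [Fintype ι] [DecidableEq ι]

/-- The density of `v : ι → Θ` when `v m` is drawn from `p` and every other coordinate from `q`. -/
def singlePDens (p q : Θ → ℝ) (m : ι) (v : ι → Θ) : ℝ :=
  ∏ j, update (fun _ => q) m p j (v j)

lemma singlePDens_eq_mul_prod_erase (p q : Θ → ℝ) (m : ι) (v : ι → Θ) :
    singlePDens p q m v = p (v m) * ∏ k ∈ Finset.univ.erase m, q (v k) := by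
  rw [singlePDens, ← Finset.mul_prod_erase _ _ (Finset.mem_univ m), update_self]
  congr 1
  exact Finset.prod_congr rfl fun j hj => by rw [update_of_ne (Finset.ne_of_mem_erase hj)]

lemma singlePDens_nonneg {p q : Θ → ℝ} (hp0 : 0 ≤ p) (hq0 : 0 ≤ q) (m : ι) (v : ι → Θ) :
    0 ≤ singlePDens p q m v :=
  Finset.prod_nonneg fun j _ => by
    rcases eq_or_ne j m with rfl | hj
    · simpa using hp0 _
    · simpa [update_of_ne hj] using hq0 _

lemma singlePDens_of_eq {p q : Θ → ℝ} {v : ι → Θ} (hv : ∀ i, p (v i) = q (v i)) (m : ι) :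
    singlePDens p q m v = ∏ j, q (v j) :=
  Finset.prod_congr rfl fun j _ => by
    rcases eq_or_ne j m with rfl | hj
    · simpa using hv j
    · rw [update_of_ne hj]

variable [MeasurableSpace Θ] {μ : Measure Θ} [SigmaFinite μ] {p q : Θ → ℝ}

lemma integrable_singlePDens (hp : Integrable p μ) (hq : Integrable q μ) (m : ι) :
    Integrable (singlePDens p q m) (Measure.pi fun _ : ι => μ) := by
  refine Integrable.fintype_prod fun j => ?_
  rcases eq_or_ne j m with rfl | hj
  · simpa using hp
  · simpa [update_of_ne hj] using hq

lemma integral_indicator_singlePDens (hp1 : ∫ x, p x ∂μ = 1) (hq1 : ∫ x, q x ∂μ = 1)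
    (m i : ι) {A : Set Θ} (hA : MeasurableSet A) :
    ∫ v, (eval i ⁻¹' A).indicator (singlePDens p q m) v ∂(Measure.pi fun _ : ι => μ)
      = ∫ x in A, update (fun _ => q) m p i x ∂μ := by
  unfold singlePDens
  rw [integral_indicator_eval_preimage_prod _ i hA, Finset.prod_eq_one, mul_one]
  exact fun j _ => integral_update_eq_one hp1 hq1 m j

lemma integral_singlePDens (hp1 : ∫ x, p x ∂μ = 1) (hq1 : ∫ x, q x ∂μ = 1) (m : ι) :
    ∫ v, singlePDens p q m v ∂(Measure.pi fun _ : ι => μ) = 1 := by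
  unfold singlePDens
  rw [integral_fintype_prod_eq_prod]
  exact Finset.prod_eq_one fun j _ => integral_update_eq_one hp1 hq1 m j

end Densities

section D4

variable {Θ : Type*} {p q : Θ → ℝ} {M : ℕ}

lemma numDens_eq_singlePDens : numDens p q M = singlePDens p q 0 :=
  funext fun v => (singlePDens_eq_mul_prod_erase p q 0 v).symm

lemma mixDens_eq_sum_singlePDens :
    mixDens p q M = fun v => (1 / (M + 1 : ℝ)) * ∑ m, singlePDens p q m v :=
  funext fun v => by simp only [mixDens, singlePDens_eq_mul_prod_erase]

lemma numDens_nonneg (hp0 : 0 ≤ p) (hq0 : 0 ≤ q) (v : Fin (M + 1) → Θ) :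
    0 ≤ numDens p q M v :=
  numDens_eq_singlePDens (p := p) ▸ singlePDens_nonneg hp0 hq0 0 v

lemma numDens_le_mul_mixDens (hp0 : 0 ≤ p) (hq0 : 0 ≤ q) (v : Fin (M + 1) → Θ) :
    numDens p q M v ≤ (M + 1) * mixDens p q M v := by
  rw [numDens_eq_singlePDens, mixDens_eq_sum_singlePDens, ← mul_assoc, mul_one_div_cancel
    (by positivity), one_mul]
  exact Finset.single_le_sum (fun m _ => singlePDens_nonneg hp0 hq0 m v) (Finset.mem_univ 0)

lemma numDens_eq_zero_of_mixDens_eq_zero (hp0 : 0 ≤ p) (hq0 : 0 ≤ q) {v : Fin (M + 1) → Θ}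
    (hv : mixDens p q M v = 0) : numDens p q M v = 0 := by
  have h := numDens_le_mul_mixDens hp0 hq0 v
  rw [hv, mul_zero] at h
  exact h.antisymm (numDens_nonneg hp0 hq0 v)

lemma mixDens_nonneg (hp0 : 0 ≤ p) (hq0 : 0 ≤ q) (v : Fin (M + 1) → Θ) :
    0 ≤ mixDens p q M v := by
  have h := (numDens_nonneg hp0 hq0 v).trans (numDens_le_mul_mixDens hp0 hq0 v)
  exact nonneg_of_mul_nonneg_right h (by positivity)

variable [MeasurableSpace Θ] {μ : Measure Θ} [SigmaFinite μ]

lemma integrable_numDens (hp : Integrable p μ) (hq : Integrable q μ) :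
    Integrable (numDens p q M) (Measure.pi fun _ => μ) :=
  numDens_eq_singlePDens (p := p) ▸ integrable_singlePDens hp hq 0

lemma integral_numDens (hp1 : ∫ x, p x ∂μ = 1) (hq1 : ∫ x, q x ∂μ = 1) :
    ∫ v, numDens p q M v ∂(Measure.pi fun _ => μ) = 1 := by
  rw [numDens_eq_singlePDens, integral_singlePDens hp1 hq1]

lemma integrable_mixDens (hp : Integrable p μ) (hq : Integrable q μ) :
    Integrable (mixDens p q M) (Measure.pi fun _ => μ) := by
  rw [mixDens_eq_sum_singlePDens]
  exact (integrable_finsetSum _ fun m _ => integrable_singlePDens hp hq m).const_mul _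

lemma integral_mixDens (hp : Integrable p μ) (hq : Integrable q μ) (hp1 : ∫ x, p x ∂μ = 1)
    (hq1 : ∫ x, q x ∂μ = 1) :
    ∫ v, mixDens p q M v ∂(Measure.pi fun _ => μ) = 1 := by
  rw [mixDens_eq_sum_singlePDens, integral_const_mul,
    integral_finsetSum _ fun m _ => integrable_singlePDens hp hq m]
  simp only [integral_singlePDens hp1 hq1, Finset.sum_const, Finset.card_univ, Fintype.card_fin]
  field_simp
  ring

lemma integral_indicator_mixDens (hp : Integrable p μ) (hq : Integrable q μ)
    (hp1 : ∫ x, p x ∂μ = 1) (hq1 : ∫ x, q x ∂μ = 1) {A : Set Θ} (hA : MeasurableSet A) :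
    ∫ v, (eval 0 ⁻¹' A).indicator (mixDens p q M) v ∂(Measure.pi fun _ => μ)
      = (1 / (M + 1 : ℝ)) * ((∫ x in A, p x ∂μ) + M * ∫ x in A, q x ∂μ) := by
  have h_ind (v : Fin (M + 1) → Θ) : (eval 0 ⁻¹' A).indicator (mixDens p q M) v
      = (1 / (M + 1 : ℝ)) * ∑ m, (eval 0 ⁻¹' A).indicator (singlePDens p q m) v := by
    by_cases hv : v ∈ eval 0 ⁻¹' A <;> simp [hv, mixDens_eq_sum_singlePDens]
  have h_int (m : Fin (M + 1)) := (integrable_singlePDens (μ := μ) hp hq m).indicator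
    (measurableSet_preimage (measurable_pi_apply 0) hA)
  simp_rw [h_ind]
  rw [integral_const_mul, integral_finsetSum _ fun m _ => h_int m]
  simp [integral_indicator_singlePDens hp1 hq1 _ (0 : Fin (M + 1)) hA, Fin.sum_univ_succ,
    update_of_ne (Fin.succ_ne_zero _).symm]

lemma ae_eq_of_numDens_ae_eq_mixDens (hM : M ≠ 0) (hp : Integrable p μ) (hq : Integrable q μ)
    (hp1 : ∫ x, p x ∂μ = 1) (hq1 : ∫ x, q x ∂μ = 1)
    (h : numDens p q M =ᵐ[Measure.pi fun _ => μ] mixDens p q M) : p =ᵐ[μ] q := by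
  refine ae_eq_of_forall_setIntegral_eq_of_sigmaFinite (fun _ _ _ => hp.integrableOn)
    (fun _ _ _ => hq.integrableOn) fun A hA _ => ?_
  have h_num : ∫ v, (eval 0 ⁻¹' A).indicator (numDens p q M) v ∂(Measure.pi fun _ => μ)
      = ∫ x in A, p x ∂μ := by
    simpa [numDens_eq_singlePDens] using
      integral_indicator_singlePDens hp1 hq1 (0 : Fin (M + 1)) 0 hA
  have h_mix := integral_indicator_mixDens (M := M) hp hq hp1 hq1 hA
  rw [← integral_congr_ae h.indicator, h_num] at h_mix
  field_simp at h_mix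
  exact mul_left_cancel₀ (Nat.cast_ne_zero.2 hM) (by linarith)

lemma numDens_ae_eq_mixDens_of_ae_eq (h : p =ᵐ[μ] q) :
    numDens p q M =ᵐ[Measure.pi fun _ => μ] mixDens p q M := by
  have hv : ∀ᵐ v ∂(Measure.pi fun _ => μ), ∀ i : Fin (M + 1), p (v i) = q (v i) :=
    ae_all_iff.2 fun i => (Measure.tendsto_eval_ae_ae (μ := fun _ => μ) (i := i)).eventually h
  filter_upwards [hv] with v hv
  rw [numDens_eq_singlePDens, mixDens_eq_sum_singlePDens]
  simp only [singlePDens_of_eq hv, Finset.sum_const, Finset.card_univ, Fintype.card_fin,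
    nsmul_eq_mul]
  field_simp
  push_cast
  ring

end D4

theorem stmt7_general {Θ : Type*} [MeasurableSpace Θ] (μ : Measure Θ) [SigmaFinite μ]
    (p q : Θ → ℝ) (M : ℕ) (hM : 1 ≤ M)
    (hp0 : ∀ x, 0 ≤ p x) (hq0 : ∀ x, 0 ≤ q x)
    (hp1 : ∫ x, p x ∂μ = 1) (hq1 : ∫ x, q x ∂μ = 1)
    (hint : Integrable
      (fun v => numDens p q M v * Real.log (numDens p q M v / mixDens p q M v))
      (Measure.pi fun _ : Fin (M + 1) => μ)) :
    D4 μ p q M = 0 ↔ p =ᵐ[μ] q := by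
  have hp : Integrable p μ := .of_integral_ne_zero (by simp [hp1])
  have hq : Integrable q μ := .of_integral_ne_zero (by simp [hq1])
  refine ⟨fun hD => ?_, fun h => klF_eq_zero_of_ae_eq (numDens_ae_eq_mixDens_of_ae_eq h)⟩
  refine ae_eq_of_numDens_ae_eq_mixDens (Nat.one_le_iff_ne_zero.mp hM) hp hq hp1 hq1 ?_
  refine ae_eq_of_integral_mul_log_div_eq_zero (integrable_numDens hp hq)
    (integrable_mixDens hp hq) (numDens_nonneg hp0 hq0) (mixDens_nonneg hp0 hq0)
    (fun v => numDens_eq_zero_of_mixDens_eq_zero hp0 hq0) hint ?_ hD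
  rw [integral_numDens hp1 hq1, integral_mixDens hp hq hp1 hq1]

/-- `D_4(p,q,M) = 0` iff `p = q` almost everywhere. -/
theorem stmt7 {Θ : Type*} [MeasurableSpace Θ] (μ : Measure Θ) [SigmaFinite μ]
    (p q : Θ → ℝ) (M : ℕ) (hM : 1 ≤ M)
    (hpm : Measurable p) (hqm : Measurable q)
    (hp0 : ∀ x, 0 ≤ p x) (hq0 : ∀ x, 0 ≤ q x)
    (hp1 : ∫ x, p x ∂μ = 1) (hq1 : ∫ x, q x ∂μ = 1)
    (hint : Integrable
      (fun v => numDens p q M v * Real.log (numDens p q M v / mixDens p q M v))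
      (Measure.pi fun _ : Fin (M + 1) => μ)) :
    D4 μ p q M = 0 ↔ p =ᵐ[μ] q :=
  stmt7_general μ p q M hM hp0 hq0 hp1 hq1 hint
end
end

section
/- Let p, q be probability densities on Θ with the same support such that E_{θ∼q}[(p(θ)/q(θ))^2] < ∞. Let θ_0 ∼ p and θ_1,…,θ_M be i.i.d. from q, and define Δ_M = −E[ log( (1/(M+1)) Σ_{k=0}^M p(θ_k)/q(θ_k) ) ]. Then Δ_M → 0 as M → ∞; equivalently, D_4(p,q,M) → KL(p‖q). -/
open MeasureTheory Real Filter

noncomputable section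

/-- `Δ_M = −E[ log( (1/(M+1)) Σ_{k=0}^M p(θ_k)/q(θ_k) ) ]` where `θ_0 ∼ p` and
`θ_1,…,θ_M` are i.i.d. from `q`. -/
def Delta {Θ : Type*} [MeasurableSpace Θ] (μ : Measure Θ) (p q : Θ → ℝ) (M : ℕ) : ℝ :=
  -∫ v, numDens p q M v *
      Real.log ((1 / (M + 1 : ℝ)) * ∑ k, p (v k) / q (v k))
    ∂(Measure.pi fun _ : Fin (M + 1) => μ)

/-!
Write `r = p / q` and `w(θ) = ∏ₖ q(θₖ)`. Since `p = r q` a.e., `Δ_M = -E_w[r(θ₀) log r̄]` where `r̄`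
is the mean of the `M + 1` ratios `r(θₖ)`, and the elementary bounds `1 - a⁻¹ ≤ log a ≤ a - 1` trap
`E_w[r(θ₀) log r̄]` between two computable quantities. By independence
`E_w[r(θ₀) (r̄ - 1)] = (E_q[r²] - 1) / (M + 1)`. By exchangeability of the coordinates,
`E_w[r(θ₀) / r̄] = E_w[∑ⱼ r(θⱼ) / ∑ₖ r(θₖ)] ≤ 1`, so `E_w[r(θ₀) (1 - r̄⁻¹)] ≥ 0`.
Hence `-(E_q[r²] - 1) / (M + 1) ≤ Δ_M ≤ 0`.
-/

section LogBounds

variable {x a : ℝ}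

lemma mul_log_le_mul_sub_one (hx : 0 ≤ x) (ha : 0 ≤ a) (hxa : a = 0 → x = 0) :
    x * log a ≤ x * (a - 1) := by
  rcases ha.eq_or_lt with rfl | ha
  · simp [hxa rfl]
  · exact mul_le_mul_of_nonneg_left (log_le_sub_one_of_pos ha) hx

lemma mul_one_sub_inv_le_mul_log (hx : 0 ≤ x) (ha : 0 ≤ a) (hxa : a = 0 → x = 0) :
    x * (1 - a⁻¹) ≤ x * log a := by
  rcases ha.eq_or_lt with rfl | ha
  · simp [hxa rfl]
  · exact mul_le_mul_of_nonneg_left (one_sub_inv_le_log_of_pos ha) hx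

end LogBounds

section MulSingle

variable {Θ ι M : Type*} [Fintype ι] [DecidableEq ι] [CommMonoid M]

lemma prod_mulSingle_apply (i : ι) (f : Θ → M) (v : ι → Θ) :
    ∏ k, (Pi.mulSingle i f : ι → Θ → M) k (v k) = f (v i) := by
  rw [Fintype.prod_eq_single i fun k hk => by simp [hk], Pi.mulSingle_eq_same]

lemma prod_mulSingle_mul_mulSingle_apply (i j : ι) (f g : Θ → M) (v : ι → Θ) :
    ∏ k, (Pi.mulSingle i f * Pi.mulSingle j g : ι → Θ → M) k (v k) = f (v i) * g (v j) := by
  simp only [Pi.mul_apply, Finset.prod_mul_distrib, prod_mulSingle_apply]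

end MulSingle

section ProductDensity

variable {Θ ι : Type*} [MeasurableSpace Θ] {μ : Measure Θ} [SigmaFinite μ] [Fintype ι]
  {q : Θ → ℝ}

lemma integrable_prod_mul_prod {F : ι → Θ → ℝ} (hF : ∀ k, Integrable (fun x => F k x * q x) μ) :
    Integrable (fun v : ι → Θ => (∏ k, F k (v k)) * ∏ k, q (v k)) (Measure.pi fun _ => μ) := by
  simp_rw [← Finset.prod_mul_distrib]
  exact Integrable.fintype_prod hF

lemma integral_prod_mul_prod (F : ι → Θ → ℝ) :
    ∫ v, (∏ k, F k (v k)) * ∏ k, q (v k) ∂(Measure.pi fun _ => μ) =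
      ∏ k, ∫ x, F k x * q x ∂μ := by
  simp_rw [← Finset.prod_mul_distrib]
  exact integral_fintype_prod_eq_prod (fun k x => F k x * q x)

lemma integral_prod_eq_one (hq1 : ∫ x, q x ∂μ = 1) :
    ∫ v, ∏ k, q (v k) ∂(Measure.pi fun _ : ι => μ) = 1 := by
  rw [integral_fintype_prod_eq_pow, hq1, one_pow]

lemma integral_pi_comp_perm (σ : Equiv.Perm ι) (F : (ι → Θ) → ℝ) :
    ∫ v, F (fun i => v (σ i)) ∂(Measure.pi fun _ => μ) = ∫ v, F v ∂(Measure.pi fun _ => μ) :=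
  (measurePreserving_arrowCongr' (fun _ => μ) (fun _ => μ) σ.symm (MeasurableEquiv.refl Θ)
    fun _ => MeasurePreserving.id μ).integral_comp' F

variable [DecidableEq ι]

lemma integrable_apply_mul_prod (hq : Integrable q μ) (i : ι) {f : Θ → ℝ}
    (hf : Integrable (fun x => f x * q x) μ) :
    Integrable (fun v : ι → Θ => f (v i) * ∏ k, q (v k)) (Measure.pi fun _ => μ) := by
  simp_rw [← prod_mulSingle_apply i f]
  refine integrable_prod_mul_prod fun k => ?_
  rcases eq_or_ne k i with rfl | hk
  · simpa using hf
  · simpa [hk] using hq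

lemma integral_apply_mul_prod (hq1 : ∫ x, q x ∂μ = 1) (i : ι) (f : Θ → ℝ) :
    ∫ v, f (v i) * ∏ k, q (v k) ∂(Measure.pi fun _ => μ) = ∫ x, f x * q x ∂μ := by
  simp_rw [← prod_mulSingle_apply i f, integral_prod_mul_prod]
  rw [Fintype.prod_eq_single i fun k hk => by simp [hk, hq1]]
  simp

lemma integrable_apply_mul_apply_mul_prod (hq : Integrable q μ) {i j : ι} (hij : i ≠ j)
    {f g : Θ → ℝ} (hf : Integrable (fun x => f x * q x) μ)
    (hg : Integrable (fun x => g x * q x) μ) :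
    Integrable (fun v : ι → Θ => f (v i) * g (v j) * ∏ k, q (v k)) (Measure.pi fun _ => μ) := by
  simp_rw [← prod_mulSingle_mul_mulSingle_apply i j f g]
  refine integrable_prod_mul_prod fun k => ?_
  by_cases hki : k = i
  · subst hki; simpa [hij] using hf
  by_cases hkj : k = j
  · subst hkj; simpa [Ne.symm hij] using hg
  simpa [hki, hkj] using hq

lemma integral_apply_mul_apply_mul_prod (hq1 : ∫ x, q x ∂μ = 1) {i j : ι} (hij : i ≠ j)
    (f g : Θ → ℝ) :
    ∫ v, f (v i) * g (v j) * ∏ k, q (v k) ∂(Measure.pi fun _ => μ) =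
      (∫ x, f x * q x ∂μ) * ∫ x, g x * q x ∂μ := by
  simp_rw [← prod_mulSingle_mul_mulSingle_apply i j f g, integral_prod_mul_prod]
  rw [Fintype.prod_eq_mul i j hij fun k hk => by simp [hk.1, hk.2, hq1]]
  simp [hij, Ne.symm hij]

end ProductDensity

section Exchangeability

variable {Θ ι : Type*} [MeasurableSpace Θ] {μ : Measure Θ} [SigmaFinite μ] [Fintype ι]
  {q r : Θ → ℝ}

lemma integral_apply_div_sum_mul_prod_eq [DecidableEq ι] (i j : ι) :
    ∫ v, r (v i) / (∑ k, r (v k)) * ∏ k, q (v k) ∂(Measure.pi fun _ => μ) =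
      ∫ v, r (v j) / (∑ k, r (v k)) * ∏ k, q (v k) ∂(Measure.pi fun _ => μ) := by
  rw [← integral_pi_comp_perm (Equiv.swap i j)]
  congr 1 with v
  dsimp only
  rw [Equiv.swap_apply_left, Equiv.sum_comp (Equiv.swap i j) fun k => r (v k),
    Equiv.prod_comp (Equiv.swap i j) fun k => q (v k)]

lemma integrable_apply_div_sum_mul_prod (hqm : Measurable q) (hrm : Measurable r)
    (hr0 : ∀ x, 0 ≤ r x) (hq : Integrable q μ) (i : ι) :
    Integrable (fun v : ι → Θ => r (v i) / (∑ k, r (v k)) * ∏ k, q (v k))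
      (Measure.pi fun _ => μ) := by
  refine (Integrable.fintype_prod (f := fun _ => q) fun _ => hq).mono (by fun_prop)
    (ae_of_all _ fun v => ?_)
  have hS : 0 ≤ ∑ k, r (v k) := Finset.sum_nonneg fun k _ => hr0 _
  rw [norm_mul, norm_of_nonneg (div_nonneg (hr0 _) hS)]
  exact mul_le_of_le_one_left (norm_nonneg _)
    (div_le_one_of_le₀ (Finset.single_le_sum (fun k _ => hr0 (v k)) (Finset.mem_univ i)) hS)

lemma card_mul_integral_apply_div_sum_mul_prod_le (hqm : Measurable q) (hrm : Measurable r)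
    (hq0 : ∀ x, 0 ≤ q x) (hr0 : ∀ x, 0 ≤ r x) (hq : Integrable q μ) (hq1 : ∫ x, q x ∂μ = 1)
    (i : ι) :
    Fintype.card ι * ∫ v, r (v i) / (∑ k, r (v k)) * ∏ k, q (v k) ∂(Measure.pi fun _ => μ)
      ≤ 1 := by
  classical
  have hg (j : ι) := integrable_apply_div_sum_mul_prod (μ := μ) hqm hrm hr0 hq j
  calc Fintype.card ι * ∫ v, r (v i) / (∑ k, r (v k)) * ∏ k, q (v k) ∂(Measure.pi fun _ => μ)
      = ∫ v, ∑ j, r (v j) / (∑ k, r (v k)) * ∏ k, q (v k) ∂(Measure.pi fun _ => μ) := by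
        rw [integral_finsetSum _ fun j _ => hg j]
        rw [Finset.sum_congr rfl fun j _ => integral_apply_div_sum_mul_prod_eq j i,
          Finset.sum_const, Finset.card_univ, nsmul_eq_mul]
    _ ≤ ∫ v, ∏ k, q (v k) ∂(Measure.pi fun _ => μ) := by
        refine integral_mono (integrable_finsetSum _ fun j _ => hg j)
          (Integrable.fintype_prod (f := fun _ => q) fun _ => hq) fun v => ?_
        rw [← Finset.sum_mul, ← Finset.sum_div]
        exact mul_le_of_le_one_left (Finset.prod_nonneg fun k _ => hq0 _) (div_self_le_one _)
    _ = 1 := integral_prod_eq_one hq1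

end Exchangeability

def sampleMean {Θ ι : Type*} [Fintype ι] (r : Θ → ℝ) (v : ι → Θ) : ℝ :=
  (Fintype.card ι : ℝ)⁻¹ * ∑ k, r (v k)

section SampleMean

variable {Θ ι : Type*} [Fintype ι] {r : Θ → ℝ}

lemma apply_eq_zero_of_sampleMean_eq_zero (hr0 : ∀ x, 0 ≤ r x) {v : ι → Θ} (i : ι)
    (hv : sampleMean r v = 0) : r (v i) = 0 := by
  have : Nonempty ι := ⟨i⟩
  have hS : ∑ k, r (v k) = 0 := by simpa [sampleMean] using hv
  exact (Finset.sum_eq_zero_iff_of_nonneg fun k _ => hr0 (v k)).mp hS i (Finset.mem_univ i)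

lemma sampleMean_nonneg (hr0 : ∀ x, 0 ≤ r x) (v : ι → Θ) : 0 ≤ sampleMean r v :=
  mul_nonneg (by positivity) (Finset.sum_nonneg fun k _ => hr0 _)

lemma apply_mul_log_sampleMean_le (hr0 : ∀ x, 0 ≤ r x) (v : ι → Θ) (i : ι) :
    r (v i) * log (sampleMean r v) ≤ r (v i) * (sampleMean r v - 1) :=
  mul_log_le_mul_sub_one (hr0 _) (sampleMean_nonneg hr0 v)
    (apply_eq_zero_of_sampleMean_eq_zero hr0 i)

lemma apply_mul_one_sub_inv_sampleMean_le (hr0 : ∀ x, 0 ≤ r x) (v : ι → Θ) (i : ι) :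
    r (v i) * (1 - (sampleMean r v)⁻¹) ≤ r (v i) * log (sampleMean r v) :=
  mul_one_sub_inv_le_mul_log (hr0 _) (sampleMean_nonneg hr0 v)
    (apply_eq_zero_of_sampleMean_eq_zero hr0 i)

end SampleMean

section SampleMeanIntegral

variable {Θ ι : Type*} [MeasurableSpace Θ] {μ : Measure Θ} [SigmaFinite μ] [Fintype ι]
  [DecidableEq ι] {q r : Θ → ℝ}

lemma integral_apply_mul_sampleMean_mul_prod (hq : Integrable q μ) (hq1 : ∫ x, q x ∂μ = 1)
    (hrq : Integrable (fun x => r x * q x) μ) (hrq1 : ∫ x, r x * q x ∂μ = 1)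
    (hr2 : Integrable (fun x => r x * r x * q x) μ) (i : ι) :
    Integrable (fun v : ι → Θ => r (v i) * sampleMean r v * ∏ k, q (v k))
        (Measure.pi fun _ => μ) ∧
      ∫ v, r (v i) * sampleMean r v * ∏ k, q (v k) ∂(Measure.pi fun _ => μ) =
        1 + ((∫ x, r x * r x * q x ∂μ) - 1) / Fintype.card ι := by
  have hsplit (v : ι → Θ) : r (v i) * sampleMean r v * ∏ k, q (v k) =
      (Fintype.card ι : ℝ)⁻¹ * ∑ j, r (v i) * r (v j) * ∏ k, q (v k) := by
    simp only [sampleMean, Finset.mul_sum, Finset.sum_mul]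
    exact Finset.sum_congr rfl fun j _ => by ring
  have hterm (j : ι) : Integrable (fun v : ι → Θ => r (v i) * r (v j) * ∏ k, q (v k))
        (Measure.pi fun _ => μ) ∧
      ∫ v, r (v i) * r (v j) * ∏ k, q (v k) ∂(Measure.pi fun _ => μ) =
        1 + if j = i then (∫ x, r x * r x * q x ∂μ) - 1 else 0 := by
    rcases eq_or_ne j i with rfl | hji
    · refine ⟨integrable_apply_mul_prod hq j hr2, ?_⟩
      simpa using integral_apply_mul_prod hq1 j fun x => r x * r x
    · refine ⟨integrable_apply_mul_apply_mul_prod hq hji.symm hrq hrq, ?_⟩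
      rw [integral_apply_mul_apply_mul_prod hq1 hji.symm, hrq1, if_neg hji, mul_one, add_zero]
  simp_rw [hsplit]
  refine ⟨(integrable_finsetSum _ fun j _ => (hterm j).1).const_mul _, ?_⟩
  have hn : (Fintype.card ι : ℝ) ≠ 0 := by
    have : Nonempty ι := ⟨i⟩
    positivity
  rw [integral_const_mul, integral_finsetSum _ fun j _ => (hterm j).1]
  simp only [fun j => (hterm j).2, Finset.sum_add_distrib, Fintype.sum_ite_eq', Finset.sum_const,
    Finset.card_univ, nsmul_eq_mul, mul_one]
  field_simp

lemma integral_apply_mul_one_sub_inv_sampleMean_mul_prod_nonneg (hqm : Measurable q)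
    (hrm : Measurable r) (hq0 : ∀ x, 0 ≤ q x) (hr0 : ∀ x, 0 ≤ r x) (hq : Integrable q μ)
    (hq1 : ∫ x, q x ∂μ = 1) (hrq : Integrable (fun x => r x * q x) μ)
    (hrq1 : ∫ x, r x * q x ∂μ = 1) (i : ι) :
    Integrable (fun v : ι → Θ => r (v i) * (1 - (sampleMean r v)⁻¹) * ∏ k, q (v k))
        (Measure.pi fun _ => μ) ∧
      0 ≤ ∫ v, r (v i) * (1 - (sampleMean r v)⁻¹) * ∏ k, q (v k) ∂(Measure.pi fun _ => μ) := by
  have hsplit (v : ι → Θ) : r (v i) * (1 - (sampleMean r v)⁻¹) * ∏ k, q (v k) =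
      r (v i) * ∏ k, q (v k) - Fintype.card ι * (r (v i) / (∑ k, r (v k)) * ∏ k, q (v k)) := by
    simp only [sampleMean, mul_inv, inv_inv, div_eq_mul_inv]
    ring
  have hg := (integrable_apply_div_sum_mul_prod (μ := μ) hqm hrm hr0 hq i).const_mul
    (Fintype.card ι : ℝ)
  have hf := integrable_apply_mul_prod hq i hrq
  simp_rw [hsplit]
  refine ⟨hf.sub hg, ?_⟩
  rw [integral_sub hf hg, integral_apply_mul_prod hq1, hrq1, integral_const_mul, sub_nonneg]
  exact card_mul_integral_apply_div_sum_mul_prod_le hqm hrm hq0 hr0 hq hq1 i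

lemma integral_apply_mul_log_sampleMean_mul_prod_mem_Icc (hqm : Measurable q)
    (hrm : Measurable r) (hq0 : ∀ x, 0 ≤ q x) (hr0 : ∀ x, 0 ≤ r x) (hq : Integrable q μ)
    (hq1 : ∫ x, q x ∂μ = 1) (hrq : Integrable (fun x => r x * q x) μ)
    (hrq1 : ∫ x, r x * q x ∂μ = 1) (hr2 : Integrable (fun x => r x * r x * q x) μ) (i : ι) :
    Integrable (fun v : ι → Θ => r (v i) * log (sampleMean r v) * ∏ k, q (v k))
        (Measure.pi fun _ => μ) ∧
      ∫ v, r (v i) * log (sampleMean r v) * ∏ k, q (v k) ∂(Measure.pi fun _ => μ) ∈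
        Set.Icc 0 (((∫ x, r x * r x * q x ∂μ) - 1) / Fintype.card ι) := by
  obtain ⟨hlowI, hlow⟩ := integral_apply_mul_one_sub_inv_sampleMean_mul_prod_nonneg (μ := μ)
    hqm hrm hq0 hr0 hq hq1 hrq hrq1 i
  obtain ⟨hmeanI, hmean⟩ := integral_apply_mul_sampleMean_mul_prod hq hq1 hrq hrq1 hr2 i
  have hrw := integrable_apply_mul_prod hq i hrq
  have hsplit : (fun v : ι → Θ => r (v i) * (sampleMean r v - 1) * ∏ k, q (v k)) =
      fun v => r (v i) * sampleMean r v * ∏ k, q (v k) - r (v i) * ∏ k, q (v k) := by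
    ext v; ring
  have hupI : Integrable (fun v : ι → Θ => r (v i) * (sampleMean r v - 1) * ∏ k, q (v k))
      (Measure.pi fun _ => μ) := hsplit ▸ hmeanI.sub hrw
  have hw0 (v : ι → Θ) : 0 ≤ ∏ k, q (v k) := Finset.prod_nonneg fun k _ => hq0 _
  have hle (v : ι → Θ) := mul_le_mul_of_nonneg_right (apply_mul_one_sub_inv_sampleMean_le hr0 v i)
    (hw0 v)
  have hge (v : ι → Θ) := mul_le_mul_of_nonneg_right (apply_mul_log_sampleMean_le hr0 v i) (hw0 v)
  have hfI : Integrable (fun v : ι → Θ => r (v i) * log (sampleMean r v) * ∏ k, q (v k))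
      (Measure.pi fun _ => μ) :=
    integrable_of_le_of_le (by unfold sampleMean; fun_prop) (ae_of_all _ hle) (ae_of_all _ hge)
      hlowI hupI
  refine ⟨hfI, hlow.trans (integral_mono hlowI hfI hle),
    (integral_mono hfI hupI hge).trans_eq ?_⟩
  rw [hsplit, integral_sub hmeanI hrw, hmean, integral_apply_mul_prod hq1, hrq1, add_sub_cancel_left]

end SampleMeanIntegral

lemma numDens_ae_eq {Θ : Type*} [MeasurableSpace Θ] {μ : Measure Θ} [SigmaFinite μ]
    {p q : Θ → ℝ} (hpq : ∀ᵐ x ∂μ, q x = 0 → p x = 0) (M : ℕ) :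
    numDens p q M =ᵐ[Measure.pi fun _ : Fin (M + 1) => μ]
      fun v => p (v 0) / q (v 0) * ∏ k, q (v k) := by
  filter_upwards [(Measure.quasiMeasurePreserving_eval _ 0).ae hpq] with v hv
  rw [numDens, ← Finset.mul_prod_erase _ _ (Finset.mem_univ 0), ← mul_assoc]
  rcases eq_or_ne (q (v 0)) 0 with hq | hq
  · simp [hq, hv hq]
  · rw [div_mul_cancel₀ _ hq]

lemma Delta_eq_neg_integral_sampleMean {Θ : Type*} [MeasurableSpace Θ] {μ : Measure Θ}
    [SigmaFinite μ] {p q : Θ → ℝ} (hpq : ∀ᵐ x ∂μ, q x = 0 → p x = 0) (M : ℕ) :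
    Delta μ p q M = -∫ v, p (v 0) / q (v 0) * log (sampleMean (fun x => p x / q x) v) *
      ∏ k, q (v k) ∂(Measure.pi fun _ : Fin (M + 1) => μ) := by
  rw [Delta, integral_congr_ae]
  filter_upwards [numDens_ae_eq hpq M] with v hv
  simp only [hv, one_div, sampleMean, Fintype.card_fin, Nat.cast_add, Nat.cast_one]
  ring

theorem stmt8_general {Θ : Type*} [MeasurableSpace Θ] (μ : Measure Θ) [SigmaFinite μ]
    (p q : Θ → ℝ)
    (hpm : Measurable p) (hqm : Measurable q)
    (hp0 : ∀ x, 0 ≤ p x) (hq0 : ∀ x, 0 ≤ q x)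
    (hp1 : ∫ x, p x ∂μ = 1) (hq1 : ∫ x, q x ∂μ = 1)
    (hsupp : ∀ᵐ x ∂μ, (p x = 0 ↔ q x = 0))
    (hmom2 : Integrable (fun x => (p x) ^ 2 / q x) μ) :
    Tendsto (fun M => Delta μ p q M) atTop (nhds 0) := by
  have hp : Integrable p μ := .of_integral_ne_zero (by simp [hp1])
  have hq : Integrable q μ := .of_integral_ne_zero (by simp [hq1])
  have hpq : ∀ᵐ x ∂μ, q x = 0 → p x = 0 := hsupp.mono fun x hx => hx.2
  have hrq : (fun x => p x / q x * q x) =ᵐ[μ] p := by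
    filter_upwards [hpq] with x hx
    rcases eq_or_ne (q x) 0 with h | h
    · simp [h, hx h]
    · exact div_mul_cancel₀ _ h
  have hr2 : (fun x => p x / q x * (p x / q x) * q x) = fun x => p x ^ 2 / q x := by
    ext x
    rcases eq_or_ne (q x) 0 with h | h
    · simp [h]
    · field_simp
  set C := ∫ x, p x ^ 2 / q x ∂μ
  have hbounds (M : ℕ) : -((C - 1) / (M + 1)) ≤ Delta μ p q M ∧ Delta μ p q M ≤ 0 := by
    have hI := (integral_apply_mul_log_sampleMean_mul_prod_mem_Icc (ι := Fin (M + 1))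
      (r := fun x => p x / q x) hqm (hpm.div hqm) hq0 (fun x => div_nonneg (hp0 x) (hq0 x))
      hq hq1 (hp.congr hrq.symm) (by rw [integral_congr_ae hrq, hp1]) (hr2 ▸ hmom2) 0).2
    rw [hr2] at hI
    simp only [Fintype.card_fin, Nat.cast_add, Nat.cast_one] at hI
    rw [Delta_eq_neg_integral_sampleMean hpq]
    constructor <;> linarith [hI.1, hI.2]
  have hlim : Tendsto (fun M : ℕ => -((C - 1) / (M + 1))) atTop (nhds 0) := by
    simpa [Function.comp_def] using
      ((tendsto_const_div_atTop_nhds_zero_nat (C - 1)).comp (tendsto_add_atTop_nat 1)).neg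
  exact tendsto_of_tendsto_of_tendsto_of_le_of_le hlim tendsto_const_nhds
    (fun M => (hbounds M).1) (fun M => (hbounds M).2)

/-- if `p`, `q` have the same support and `E_{θ∼q}[(p/q)²] < ∞`
then `Δ_M → 0` as `M → ∞` (equivalently, `D_4(p,q,M) → KL(p‖q)`). -/
theorem stmt8 {Θ : Type*} [MeasurableSpace Θ] (μ : Measure Θ) [SigmaFinite μ]
    (p q : Θ → ℝ)
    (hpm : Measurable p) (hqm : Measurable q)
    (hp0 : ∀ x, 0 ≤ p x) (hq0 : ∀ x, 0 ≤ q x)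
    (hp1 : ∫ x, p x ∂μ = 1) (hq1 : ∫ x, q x ∂μ = 1)
    (hsupp : ∀ᵐ x ∂μ, (p x = 0 ↔ q x = 0))
    (hmom2 : Integrable (fun x => (p x) ^ 2 / q x) μ)
    (hint : ∀ M, Integrable
      (fun v => numDens p q M v *
        Real.log ((1 / (M + 1 : ℝ)) * ∑ k, p (v k) / q (v k)))
      (Measure.pi fun _ : Fin (M + 1) => μ)) :
    Tendsto (fun M => Delta μ p q M) atTop (nhds 0) :=
  stmt8_general μ p q hpm hqm hp0 hq0 hp1 hq1 hsupp hmom2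
end
end

section
/- With M = 1, the multiclass divergence dominates the binary divergence: for probability densities p, q on Θ, KL( p(θ_1)q(θ_2) ‖ (p(θ_1)q(θ_2) + q(θ_1)p(θ_2))/2 ) ≥ (1/2)KL(p ‖ (p+q)/2) + (1/2)KL(q ‖ (p+q)/2). -/
open MeasureTheory Real

noncomputable section

private lemma ptwise (u v t s : ℝ) (hu : 0 ≤ u) (hv : 0 ≤ v) (ht : 0 ≤ t) (hs : 0 ≤ s) :
    u * Real.log (u / ((u + v) / 2)) * t + (u * t - u * (u * t + v * s) / (u + v))
      ≤ u * t * Real.log (u * t / ((u * t + v * s) / 2)) := by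
  rcases eq_or_lt_of_le hu with h | hu0
  · simp [← h]
  rcases eq_or_lt_of_le ht with h | ht0
  · rw [← h]
    have : 0 ≤ u * (u * 0 + v * s) / (u + v) := by positivity
    simp only [mul_zero, zero_mul, mul_zero] at this ⊢
    nlinarith [this]
  · have huv : 0 < u + v := by linarith
    have hb : 0 < (u * t + v * s) / (u + v) := div_pos (by nlinarith) huv
    set b := (u * t + v * s) / (u + v) with hbdef
    have hA : 0 < u * t / ((u * t + v * s) / 2) := by
      apply div_pos (by positivity)
      have : 0 < u * t + v * s := by nlinarith
      linarith
    have hB : 0 < u / ((u + v) / 2) := by positivity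
    have hlog1 : Real.log (u * t / ((u * t + v * s) / 2)) - Real.log (u / ((u + v) / 2))
        = Real.log (t / b) := by
      rw [← Real.log_div hA.ne' hB.ne']
      congr 1
      rw [hbdef]
      field_simp
    have hlog2 : Real.log (b / t) ≤ b / t - 1 := Real.log_le_sub_one_of_pos (by positivity)
    have hlog3 : 1 - b / t ≤ Real.log (t / b) := by
      have hinv := Real.log_inv (b / t)
      rw [inv_div] at hinv
      linarith
    have hub : u * (u * t + v * s) / (u + v) = u * b := by rw [hbdef]; ring
    rw [hub]
    have key : u * t - u * b ≤ u * t * Real.log (t / b) := by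
      have h1 : u * t * (1 - b / t) ≤ u * t * Real.log (t / b) :=
        mul_le_mul_of_nonneg_left hlog3 (by positivity)
      have h2 : u * t * (1 - b / t) = u * t - u * b := by field_simp
      linarith
    have e1 : u * Real.log (u / ((u + v) / 2)) * t
        = u * t * Real.log (u / ((u + v) / 2)) := by ring
    have e2 : u * t * Real.log (u * t / ((u * t + v * s) / 2))
        = u * t * Real.log (u / ((u + v) / 2)) + u * t * Real.log (t / b) := by
      rw [← mul_add]
      congr 1
      linarith [hlog1]
    rw [e1, e2]
    linarith [key]

private lemma myIntegrable_of_integral_eq_one {α : Type*} [MeasurableSpace α] {μ : Measure α}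
    {p : α → ℝ} (h : ∫ x, p x ∂μ = 1) : Integrable p μ := by
  by_contra hc
  rw [integral_undef hc] at h
  exact one_ne_zero h.symm

private lemma aux {Θ : Type*} [MeasurableSpace Θ] (μ : Measure Θ) [SigmaFinite μ]
    (p q : Θ → ℝ)
    (hp0 : ∀ x, 0 ≤ p x) (hq0 : ∀ x, 0 ≤ q x)
    (hp1 : ∫ x, p x ∂μ = 1) (hq1 : ∫ x, q x ∂μ = 1)
    (hip : Integrable (fun x => p x * Real.log (p x / ((p x + q x) / 2))) μ)
    (hijoint : Integrable
      (fun z : Θ × Θ => p z.1 * q z.2 *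
        Real.log ((p z.1 * q z.2) / ((p z.1 * q z.2 + q z.1 * p z.2) / 2)))
      (μ.prod μ)) :
    klF μ p (fun x => (p x + q x) / 2) ≤
      klF (μ.prod μ) (fun z => p z.1 * q z.2)
        (fun z => (p z.1 * q z.2 + q z.1 * p z.2) / 2) := by
  have hpint : Integrable p μ := myIntegrable_of_integral_eq_one hp1
  have hqint : Integrable q μ := myIntegrable_of_integral_eq_one hq1
  set J : Θ × Θ → ℝ := fun z => p z.1 * q z.2 *
      Real.log ((p z.1 * q z.2) / ((p z.1 * q z.2 + q z.1 * p z.2) / 2)) with hJ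
  set K : Θ × Θ → ℝ := fun z =>
      (p z.1 * Real.log (p z.1 / ((p z.1 + q z.1) / 2))) * q z.2 with hK
  have hKint : Integrable K (μ.prod μ) := hip.mul_prod hqint
  have hKval : ∫ z, K z ∂(μ.prod μ) = klF μ p (fun x => (p x + q x) / 2) := by
    rw [hK]
    have h := integral_prod_mul (μ := μ) (ν := μ)
      (fun x => p x * Real.log (p x / ((p x + q x) / 2))) q
    simp only at h ⊢
    rw [h, hq1, mul_one]; rfl
  have hdiff : Integrable (fun z => J z - K z) (μ.prod μ) := hijoint.sub hKint
  have hmain : 0 ≤ ∫ z, J z - K z ∂(μ.prod μ) := by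
    rw [integral_prod _ hdiff]
    apply integral_nonneg_of_ae
    filter_upwards [hdiff.prod_right_ae] with x hx
    rcases eq_or_lt_of_le (hp0 x) with h0 | h0
    · have : (fun y => J (x, y) - K (x, y)) = fun _ => 0 := by
        funext y; simp [hJ, hK, ← h0]
      simp [this]
    · -- lower bound function
      set L : Θ → ℝ := fun y =>
        p x * q y - p x * (p x * q y + q x * p y) / (p x + q x) with hL
      have hLint : Integrable L μ := by
        have : L = fun y =>
            (p x - p x * p x / (p x + q x)) * q y - (p x * q x / (p x + q x)) * p y := by
          funext y; rw [hL]; field_simp; ring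
        rw [this]
        exact (hqint.const_mul _).sub (hpint.const_mul _)
      have hLval : ∫ y, L y ∂μ = 0 := by
        have : L = fun y =>
            (p x - p x * p x / (p x + q x)) * q y - (p x * q x / (p x + q x)) * p y := by
          funext y; rw [hL]; field_simp; ring
        rw [this, integral_sub ((hqint.const_mul _)) ((hpint.const_mul _)),
          integral_const_mul, integral_const_mul, hp1, hq1]
        have huv : 0 < p x + q x := by have := hq0 x; linarith
        field_simp
        ring
      have hle : ∀ y, L y ≤ J (x, y) - K (x, y) := by
        intro y
        have := ptwise (p x) (q x) (q y) (p y) (hp0 x) (hq0 x) (hq0 y) (hp0 y)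
        simp only [hJ, hK, hL]
        linarith
      calc (0 : ℝ) = ∫ y, L y ∂μ := hLval.symm
        _ ≤ ∫ y, J (x, y) - K (x, y) ∂μ := integral_mono hLint hx hle
  have hsub : ∫ z, J z - K z ∂(μ.prod μ)
      = (∫ z, J z ∂(μ.prod μ)) - ∫ z, K z ∂(μ.prod μ) := integral_sub hijoint hKint
  have : klF (μ.prod μ) (fun z => p z.1 * q z.2)
      (fun z => (p z.1 * q z.2 + q z.1 * p z.2) / 2) = ∫ z, J z ∂(μ.prod μ) := rfl
  rw [this, ← hKval]
  linarith [hmain, hsub]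

/-- with `M = 1`, the multiclass divergence dominates the binary one:
`KL( p⊗q ‖ (p⊗q + q⊗p)/2 ) ≥ (1/2)KL(p‖(p+q)/2) + (1/2)KL(q‖(p+q)/2)`. -/
theorem stmt12 {Θ : Type*} [MeasurableSpace Θ] (μ : Measure Θ) [SigmaFinite μ]
    (p q : Θ → ℝ) (hpm : Measurable p) (hqm : Measurable q)
    (hp0 : ∀ x, 0 ≤ p x) (hq0 : ∀ x, 0 ≤ q x)
    (hp1 : ∫ x, p x ∂μ = 1) (hq1 : ∫ x, q x ∂μ = 1)
    (hip : Integrable (fun x => p x * Real.log (p x / ((p x + q x) / 2))) μ)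
    (hiq : Integrable (fun x => q x * Real.log (q x / ((p x + q x) / 2))) μ)
    (hijoint : Integrable
      (fun z : Θ × Θ => p z.1 * q z.2 *
        Real.log ((p z.1 * q z.2) / ((p z.1 * q z.2 + q z.1 * p z.2) / 2)))
      (μ.prod μ)) :
    (1 / 2) * klF μ p (fun x => (p x + q x) / 2) +
        (1 / 2) * klF μ q (fun x => (p x + q x) / 2) ≤
      klF (μ.prod μ) (fun z => p z.1 * q z.2)
        (fun z => (p z.1 * q z.2 + q z.1 * p z.2) / 2) := by
  have h1 := aux μ p q hp0 hq0 hp1 hq1 hip hijoint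
  -- swapped versions
  have hiq' : Integrable (fun x => q x * Real.log (q x / ((q x + p x) / 2))) μ := by
    have : (fun x => q x * Real.log (q x / ((q x + p x) / 2)))
        = fun x => q x * Real.log (q x / ((p x + q x) / 2)) := by
      funext x; rw [add_comm (q x)]
    rw [this]; exact hiq
  have hswap : Integrable
      (fun z : Θ × Θ => q z.1 * p z.2 *
        Real.log ((q z.1 * p z.2) / ((q z.1 * p z.2 + p z.1 * q z.2) / 2)))
      (μ.prod μ) := by
    have h := hijoint.swap
    have : ((fun z : Θ × Θ => p z.1 * q z.2 *
        Real.log ((p z.1 * q z.2) / ((p z.1 * q z.2 + q z.1 * p z.2) / 2))) ∘ Prod.swap)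
        = fun z : Θ × Θ => q z.1 * p z.2 *
        Real.log ((q z.1 * p z.2) / ((q z.1 * p z.2 + p z.1 * q z.2) / 2)) := by
      funext z
      simp only [Function.comp_apply, Prod.swap]
      rw [mul_comm (p z.2) (q z.1), mul_comm (q z.2) (p z.1)]
    rwa [this] at h
  have h2 := aux μ q p hq0 hp0 hq1 hp1 hiq' hswap
  have heqkl : klF (μ.prod μ) (fun z => q z.1 * p z.2)
        (fun z => (q z.1 * p z.2 + p z.1 * q z.2) / 2)
      = klF (μ.prod μ) (fun z => p z.1 * q z.2)
        (fun z => (p z.1 * q z.2 + q z.1 * p z.2) / 2) := by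
    unfold klF
    rw [← integral_prod_swap (μ := μ) (ν := μ)
      (fun z : Θ × Θ => p z.1 * q z.2 *
        Real.log ((p z.1 * q z.2) / ((p z.1 * q z.2 + q z.1 * p z.2) / 2)))]
    congr 1
    funext z
    simp only [Prod.swap]
    rw [mul_comm (p z.2) (q z.1), mul_comm (q z.2) (p z.1)]
  have h2' : klF μ q (fun x => (p x + q x) / 2) ≤
      klF (μ.prod μ) (fun z => p z.1 * q z.2)
        (fun z => (p z.1 * q z.2 + q z.1 * p z.2) / 2) := by
    rw [← heqkl]
    have : klF μ q (fun x => (q x + p x) / 2) = klF μ q (fun x => (p x + q x) / 2) := by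
      unfold klF; congr 1; funext x; simp only; rw [add_comm (q x)]
    rw [← this]
    exact h2
  linarith
end
end

section
/- In the setting of the preceding sufficiency result, let π_c^p and π_c^q be the laws of ĉ(θ,y) under (θ,y)∼p and (θ,y)∼q respectively. Then the mixture divergence is preserved under the projection: w·KL(p‖r) + (1−w)·KL(q‖r) = w·KL(π_c^p‖r_c) + (1−w)·KL(π_c^q‖r_c), where r = w·p + (1−w)·q and r_c = w·π_c^p + (1−w)·π_c^q. -/
open MeasureTheory Real ENNReal

noncomputable section

/-- Kullback–Leibler divergence between measures, defined via the log-likelihood ratio. -/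
def klM {β : Type*} [MeasurableSpace β] (ν₁ ν₂ : Measure β) : ℝ :=
  ∫ x, llr ν₁ ν₂ x ∂ν₁

lemma aux_map_withDensity {α β : Type*} [MeasurableSpace α] [MeasurableSpace β]
    (R : Measure α) {c : α → β} (hcm : Measurable c) {h : β → ℝ≥0∞} (hh : Measurable h) :
    (R.withDensity (fun z => h (c z))).map c = (R.map c).withDensity h := by
  ext s hs
  rw [Measure.map_apply hcm hs, withDensity_apply _ hs, withDensity_apply _ (hcm hs),
    setLIntegral_map hs hh hcm]

lemma aux_kl_proj {α : Type*} [MeasurableSpace α] (R : Measure α) [IsFiniteMeasure R]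
    {c : α → ℝ} (hcm : Measurable c) {f : ℝ → ℝ} (hfm : Measurable f) (hf0 : ∀ t, 0 ≤ f t)
    {P : Measure α} (hP : P = R.withDensity (fun z => ENNReal.ofReal (f (c z)))) :
    klM P R = klM (P.map c) (R.map c) := by
  haveI : IsFiniteMeasure (R.map c) := Measure.isFiniteMeasure_map R c
  have hmeas : Measurable (fun t => ENNReal.ofReal (f t)) := ENNReal.measurable_ofReal.comp hfm
  have h1 : P.rnDeriv R =ᵐ[R] fun z => ENNReal.ofReal (f (c z)) := by
    have hm2 : Measurable (fun z => ENNReal.ofReal (f (c z))) := by exact hmeas.comp hcm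
    rw [hP]; exact Measure.rnDeriv_withDensity R hm2
  have hac : P ≪ R := hP ▸ withDensity_absolutelyContinuous _ _
  have hmap : P.map c = (R.map c).withDensity (fun t => ENNReal.ofReal (f t)) := by
    rw [hP, aux_map_withDensity R hcm hmeas]
  have h2 : (P.map c).rnDeriv (R.map c) =ᵐ[R.map c] fun t => ENNReal.ofReal (f t) := by
    rw [hmap]; exact Measure.rnDeriv_withDensity _ hmeas
  have hac2 : P.map c ≪ R.map c := hmap ▸ withDensity_absolutelyContinuous _ _
  have e1 : llr P R =ᵐ[P] fun z => Real.log (f (c z)) := by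
    filter_upwards [hac.ae_le h1] with z hz
    simp [llr, hz, ENNReal.toReal_ofReal (hf0 _)]
  have e2 : llr (P.map c) (R.map c) =ᵐ[P.map c] fun t => Real.log (f t) := by
    filter_upwards [hac2.ae_le h2] with t ht
    simp [llr, ht, ENNReal.toReal_ofReal (hf0 _)]
  calc klM P R = ∫ z, Real.log (f (c z)) ∂P := integral_congr_ae e1
    _ = ∫ t, Real.log (f t) ∂(P.map c) :=
        (integral_map hcm.aemeasurable
          ((Real.measurable_log.comp hfm).aestronglyMeasurable)).symm
    _ = klM (P.map c) (R.map c) := (integral_congr_ae e2).symm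

/-- Theorem 6(ii): projecting onto the Bayes classifier score
`ĉ = (1−w)q/(w·p+(1−w)q)` preserves the mixture divergence:
`w·KL(p‖r) + (1−w)·KL(q‖r) = w·KL(π_c^p‖r_c) + (1−w)·KL(π_c^q‖r_c)`. -/
theorem stmt15 {α : Type*} [MeasurableSpace α] (μ : Measure α)
    (w : ℝ) (hw : w ∈ Set.Ioo (0:ℝ) 1)
    (p q : α → ℝ) (hpm : Measurable p) (hqm : Measurable q)
    (hp0 : ∀ z, 0 ≤ p z) (hq0 : ∀ z, 0 ≤ q z)
    (hp1 : ∫ z, p z ∂μ = 1) (hq1 : ∫ z, q z ∂μ = 1)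
    (c : α → ℝ) (hcm : Measurable c)
    (hc : ∀ z, c z = (1 - w) * q z / (w * p z + (1 - w) * q z))
    (P : Measure α) (hP : P = μ.withDensity (fun z => ENNReal.ofReal (p z)))
    (Q : Measure α) (hQ : Q = μ.withDensity (fun z => ENNReal.ofReal (q z)))
    (R : Measure α) (hR : R = ENNReal.ofReal w • P + ENNReal.ofReal (1 - w) • Q)
    (Rc : Measure ℝ)
    (hRc : Rc = ENNReal.ofReal w • P.map c + ENNReal.ofReal (1 - w) • Q.map c)
    (hiP : Integrable (llr P R) P) (hiQ : Integrable (llr Q R) Q)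
    (hiPc : Integrable (llr (P.map c) Rc) (P.map c))
    (hiQc : Integrable (llr (Q.map c) Rc) (Q.map c)) :
    w * klM P R + (1 - w) * klM Q R =
      w * klM (P.map c) Rc + (1 - w) * klM (Q.map c) Rc := by
  obtain ⟨hw0, hw1⟩ := hw
  have hw1' : (0:ℝ) < 1 - w := by linarith
  -- integrability of densities
  have hpInt : Integrable p μ := by
    by_contra h; rw [integral_undef h] at hp1; norm_num at hp1
  have hqInt : Integrable q μ := by
    by_contra h; rw [integral_undef h] at hq1; norm_num at hq1
  -- finiteness
  have hPfin : IsFiniteMeasure P := by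
    rw [hP]; exact isFiniteMeasure_withDensity_ofReal hpInt.hasFiniteIntegral
  have hQfin : IsFiniteMeasure Q := by
    rw [hQ]; exact isFiniteMeasure_withDensity_ofReal hqInt.hasFiniteIntegral
  haveI hRfin : IsFiniteMeasure R := by
    constructor
    rw [hR]
    simp only [Measure.add_apply, Measure.smul_apply, smul_eq_mul]
    exact ENNReal.add_lt_top.2 ⟨ENNReal.mul_lt_top ofReal_lt_top (measure_lt_top P _),
      ENNReal.mul_lt_top ofReal_lt_top (measure_lt_top Q _)⟩
  -- pointwise facts about c
  have hD0 : ∀ z, 0 ≤ w * p z + (1 - w) * q z := fun z =>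
    add_nonneg (mul_nonneg hw0.le (hp0 z)) (mul_nonneg hw1'.le (hq0 z))
  have hc0 : ∀ z, 0 ≤ c z := by
    intro z; rw [hc z]
    exact div_nonneg (mul_nonneg hw1'.le (hq0 z)) (hD0 z)
  have hc1 : ∀ z, c z ≤ 1 := by
    intro z; rw [hc z]
    rcases eq_or_lt_of_le (hD0 z) with h | h
    · rw [← h]; simp
    · rw [div_le_one h]; nlinarith [mul_nonneg hw0.le (hp0 z)]
  -- R as a density over μ
  have hDmeas : Measurable (fun z => ENNReal.ofReal (w * p z + (1 - w) * q z)) :=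
    ENNReal.measurable_ofReal.comp ((hpm.const_mul w).add (hqm.const_mul (1 - w)))
  have hRD : R = μ.withDensity (fun z => ENNReal.ofReal (w * p z + (1 - w) * q z)) := by
    rw [hR, hP, hQ]
    ext s hs
    simp only [Measure.coe_add, Pi.add_apply, Measure.smul_apply, smul_eq_mul]
    have hmp : Measurable (fun z => ENNReal.ofReal (p z)) := by
      exact ENNReal.measurable_ofReal.comp hpm
    have hmq : Measurable (fun z => ENNReal.ofReal (q z)) := by
      exact ENNReal.measurable_ofReal.comp hqm
    rw [withDensity_apply _ hs, withDensity_apply _ hs, withDensity_apply _ hs,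
      ← lintegral_const_mul _ hmp, ← lintegral_const_mul _ hmq,
      ← lintegral_add_left (hmp.const_mul _)]
    refine lintegral_congr fun z => ?_
    rw [← ENNReal.ofReal_mul hw0.le, ← ENNReal.ofReal_mul hw1'.le,
      ← ENNReal.ofReal_add (mul_nonneg hw0.le (hp0 z)) (mul_nonneg hw1'.le (hq0 z))]
  -- key pointwise identities
  have hkey : ∀ z, (w * p z + (1 - w) * q z) * ((1 - c z) / w) = p z ∧
      (w * p z + (1 - w) * q z) * (c z / (1 - w)) = q z := by
    intro z
    rcases eq_or_lt_of_le (hD0 z) with h | h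
    · have hp' : p z = 0 := by nlinarith [hp0 z, hq0 z]
      have hq' : q z = 0 := by nlinarith [hp0 z, hq0 z]
      constructor <;> rw [← h] <;> simp [hp', hq']
    · have hcz := hc z
      constructor
      · rw [hcz]; field_simp; ring
      · rw [hcz]; field_simp
  -- P and Q as densities over R with functions of c
  set fP : ℝ → ℝ := fun t => max ((1 - t) / w) 0 with hfP
  set fQ : ℝ → ℝ := fun t => max (t / (1 - w)) 0 with hfQ
  have hfPmeas : Measurable fP :=
    ((measurable_const.sub measurable_id).div_const w).max measurable_const
  have hfQmeas : Measurable fQ := (measurable_id.div_const (1 - w)).max measurable_const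
  have hfPc : ∀ z, fP (c z) = (1 - c z) / w := fun z =>
    max_eq_left (div_nonneg (by linarith [hc1 z]) hw0.le)
  have hfQc : ∀ z, fQ (c z) = c z / (1 - w) := fun z =>
    max_eq_left (div_nonneg (hc0 z) hw1'.le)
  have hmfP : Measurable (fun z => ENNReal.ofReal (fP (c z))) := by
    exact ENNReal.measurable_ofReal.comp (hfPmeas.comp hcm)
  have hmfQ : Measurable (fun z => ENNReal.ofReal (fQ (c z))) := by
    exact ENNReal.measurable_ofReal.comp (hfQmeas.comp hcm)
  have hPR : P = R.withDensity (fun z => ENNReal.ofReal (fP (c z))) := by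
    rw [hRD, ← withDensity_mul μ hDmeas hmfP, hP]
    congr 1
    funext z
    simp only [Pi.mul_apply]
    rw [hfPc z, ← ENNReal.ofReal_mul (hD0 z), (hkey z).1]
  have hQR : Q = R.withDensity (fun z => ENNReal.ofReal (fQ (c z))) := by
    rw [hRD, ← withDensity_mul μ hDmeas hmfQ, hQ]
    congr 1
    funext z
    simp only [Pi.mul_apply]
    rw [hfQc z, ← ENNReal.ofReal_mul (hD0 z), (hkey z).2]
  -- Rc is the pushforward of R
  have hRcm : Rc = R.map c := by
    rw [hRc, hR, Measure.map_add _ _ hcm, Measure.map_smul, Measure.map_smul]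
  -- apply the projection lemma
  have hKP : klM P R = klM (P.map c) Rc := by
    rw [hRcm]
    exact aux_kl_proj R hcm hfPmeas (fun t => le_max_right _ _) hPR
  have hKQ : klM Q R = klM (Q.map c) Rc := by
    rw [hRcm]
    exact aux_kl_proj R hcm hfQmeas (fun t => le_max_right _ _) hQR
  rw [hKP, hKQ]
end
end
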